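/- Let ψ : (0,∞) → (0,∞) be concave and increasing with ψ(t) → ∞ as t → ∞. Let ω be a singular dilation-invariant state on ℓ∞ (vanishing on c₀, invariant under each dilation σₙ), extended to nonnegative unbounded sequences by ω̄(x) = sup{ω(y) : 0 ≤ y ≤ x, y ∈ ℓ∞}. For nonincreasing nonnegative sequences a define τ_ω(a) = ω̄({ (1/ψ(n+1)) ∑_{k=0}^{n} a(k) }_{n≥0}). Suppose τ_ω is finite on all nonincreasing a with sup_n (1/ψ(n+1)) ∑_{k=0}^n a(k) < ∞. If τ_ω is additive in the sense that τ_ω(c) = τ_ω(a) + τ_ω(b) whenever c is the nonincreasing rearrangement of the disjoint sum of nonincreasing sequences a and b, then ω({ψ(2n+1)/ψ(n+1)}_{n≥0}) = 1. -/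

import Mathlib

open Filter
open scoped ENNReal

/-- A sequence `x : ℕ → ℝ` is bounded (an element of `ℓ∞`). -/
def Bdd (x : ℕ → ℝ) : Prop := ∃ C, ∀ n, |x n| ≤ C

/-- A state on `ℓ∞`: a positive linear functional `ω` with `ω(1) = 1`.
We model it as a function on all sequences whose linearity and positivity
are only required on bounded sequences. -/
structure LinfState where
  toFun : (ℕ → ℝ) → ℝ
  map_add' : ∀ x y, Bdd x → Bdd y → toFun (x + y) = toFun x + toFun y
  map_smul' : ∀ (c : ℝ) (x), Bdd x → toFun (c • x) = c * toFun x
  pos' : ∀ x, Bdd x → (∀ n, 0 ≤ x n) → 0 ≤ toFun x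
  map_one' : toFun (fun _ => (1 : ℝ)) = 1

/-- The extension `ω̄` of a state `ω` to arbitrary nonnegative (possibly
unbounded) sequences, with values in `[0,∞]`:
`ω̄(x) = sup { ω(y) : y ∈ ℓ∞, 0 ≤ y ≤ x }`. -/
noncomputable def LinfState.ext (S : LinfState) (x : ℕ → ℝ) : ℝ≥0∞ :=
  ⨆ y ∈ {y : ℕ → ℝ | Bdd y ∧ (∀ n, 0 ≤ y n) ∧ ∀ n, y n ≤ x n},
    ENNReal.ofReal (S.toFun y)

/-- The `ψ`-Cesàro transform: `a ↦ { (1/ψ(n+1)) ∑_{k=0}^n a(k) }_{n≥0}`,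
followed by the extended state `ω̄`. -/
noncomputable def tau (S : LinfState) (ψ : ℝ → ℝ) (a : ℕ → ℝ) : ℝ≥0∞ :=
  S.ext (fun n => (∑ k ∈ Finset.range (n + 1), a k) / ψ ((n : ℝ) + 1))

/-!
Let `a k = ψ (k + 2) - ψ (k + 1)`: it is nonincreasing by concavity, and `c k = a ⌊k / 2⌋` is
the nonincreasing rearrangement of the disjoint sum of `a` with itself. The entries of `a` are
bounded and `ψ → ∞`, so the `ψ`-means of `a` tend to `1`, whence `τ(a) = 1` and, by additivity,
`τ(c) = 2`. Up to a null sequence, the `ψ`-means of `c` are `σ₂` applied to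
`m ↦ 2 ψ(m + 1) / ψ(2m + 1)`, so singularity and dilation invariance give `ω(r⁻¹) = 1` for the
ratio `r m = ψ(2m + 1) / ψ(m + 1)`. Finally `1 ≤ r ≤ 2`, and `0 ≤ r - 1 ≤ 2 (1 - r⁻¹)` turns
this into `ω(r) = 1`.
-/

open Finset Topology

namespace Bdd

variable {x y : ℕ → ℝ}

lemma of_le_of_le {a b : ℝ} (ha : ∀ n, a ≤ x n) (hb : ∀ n, x n ≤ b) : Bdd x :=
  ⟨max |a| |b|, fun n => abs_le_max_abs_abs (ha n) (hb n)⟩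

lemma const (c : ℝ) : Bdd (fun _ => c) := ⟨|c|, fun _ => le_rfl⟩

lemma add (hx : Bdd x) (hy : Bdd y) : Bdd (x + y) := by
  obtain ⟨C, hC⟩ := hx
  obtain ⟨D, hD⟩ := hy
  exact ⟨C + D, fun n => (abs_add_le _ _).trans (add_le_add (hC n) (hD n))⟩

lemma sub (hx : Bdd x) (hy : Bdd y) : Bdd (x - y) := by
  obtain ⟨C, hC⟩ := hx
  obtain ⟨D, hD⟩ := hy
  exact ⟨C + D, fun n => (abs_sub _ _).trans (add_le_add (hC n) (hD n))⟩

lemma smul (c : ℝ) (hx : Bdd x) : Bdd (c • x) := by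
  obtain ⟨C, hC⟩ := hx
  exact ⟨|c| * C, fun n => by
    simpa only [Pi.smul_apply, smul_eq_mul, abs_mul] using
      mul_le_mul_of_nonneg_left (hC n) (abs_nonneg c)⟩

lemma comp (hx : Bdd x) (f : ℕ → ℕ) : Bdd (x ∘ f) := by
  obtain ⟨C, hC⟩ := hx
  exact ⟨C, fun n => hC (f n)⟩

lemma of_tendsto {l : ℝ} (h : Tendsto x atTop (𝓝 l)) : Bdd x := by
  obtain ⟨C, hC⟩ := isBounded_iff_forall_norm_le.mp (Metric.isBounded_range_of_tendsto x h)
  exact ⟨C, fun n => hC _ ⟨n, rfl⟩⟩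

lemma of_tendsto_sub (hy : Bdd y) (h : Tendsto (x - y) atTop (𝓝 0)) : Bdd x := by
  simpa using (of_tendsto h).add hy

lemma isBoundedUnder_norm (hx : Bdd x) : IsBoundedUnder (· ≤ ·) atTop (norm ∘ x) := by
  obtain ⟨C, hC⟩ := hx
  exact isBoundedUnder_of ⟨C, hC⟩

lemma tendsto_div_atTop {D : ℕ → ℝ} (hx : Bdd x) (hD : Tendsto D atTop atTop) :
    Tendsto (x / D) atTop (𝓝 0) := by
  have := (tendsto_inv_atTop_zero.comp hD).zero_mul_isBoundedUnder_le hx.isBoundedUnder_norm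
  convert this using 2 with n
  simp [div_eq_inv_mul]

end Bdd

lemma tendsto_div_sub_div_of_bdd {N N' D D' : ℕ → ℝ} (hD : Tendsto D atTop atTop)
    (hN : Bdd (N - N')) (hDD : Bdd (D - D')) (hq : Bdd (N' / D')) :
    Tendsto (N / D - N' / D') atTop (𝓝 0) := by
  obtain ⟨C, hC⟩ := id hDD
  have hD' : ∀ᶠ n in atTop, 0 < D n ∧ 0 < D' n := by
    filter_upwards [hD.eventually_gt_atTop (max 0 C)] with n hn
    have := (le_abs_self _).trans (hC n)
    simp only [Pi.sub_apply, max_lt_iff] at hn this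
    exact ⟨hn.1, by linarith⟩
  have hlim := (hN.tendsto_div_atTop hD).sub
    ((hDD.tendsto_div_atTop hD).zero_mul_isBoundedUnder_le hq.isBoundedUnder_norm)
  rw [sub_zero] at hlim
  -- `N / D - N' / D' = (N - N') / D - ((D - D') / D) * (N' / D')` once `D, D' ≠ 0`
  refine hlim.congr' ?_
  filter_upwards [hD'] with n ⟨hn, hn'⟩
  simp only [Pi.sub_apply, Pi.div_apply]
  field_simp
  ring

lemma sum_range_comp_div_two {M : Type*} [AddCommMonoid M] (f : ℕ → M) (n : ℕ) :
    ∑ k ∈ range n, f (k / 2) = ∑ k ∈ range ((n + 1) / 2), f k + ∑ k ∈ range (n / 2), f k := by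
  induction n with
  | zero => simp
  | succ n ih =>
    rw [sum_range_succ, ih, show (n + 1 + 1) / 2 = n / 2 + 1 by omega, sum_range_succ]
    abel

lemma sum_elim_comp_natSumNatEquivNat_symm {α : Type*} (f : ℕ → α) (k : ℕ) :
    Sum.elim f f (Equiv.natSumNatEquivNat.symm k) = f (k / 2) := by
  obtain ⟨s, rfl⟩ := Equiv.natSumNatEquivNat.surjective k
  rcases s with m | m
  · simp [Equiv.natSumNatEquivNat_apply]
  · simp [Equiv.natSumNatEquivNat_apply, show (2 * m + 1) / 2 = m by omega]

namespace LinfState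

def IsSingular (S : LinfState) : Prop :=
  ∀ x : ℕ → ℝ, Bdd x → Tendsto x atTop (𝓝 0) → S.toFun x = 0

variable (S : LinfState) {x y : ℕ → ℝ}

lemma map_sub (hx : Bdd x) (hy : Bdd y) : S.toFun (x - y) = S.toFun x - S.toFun y := by
  have := S.map_add' (x - y) y (hx.sub hy) hy
  rw [sub_add_cancel] at this
  linarith

lemma map_const (c : ℝ) : S.toFun (fun _ => c) = c := by
  have h := S.map_smul' c (fun _ => 1) (Bdd.const 1)
  rwa [S.map_one', mul_one, show (c • fun _ : ℕ => (1 : ℝ)) = fun _ => c by ext; simp] at h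

lemma mono (hx : Bdd x) (hy : Bdd y) (h : ∀ n, x n ≤ y n) : S.toFun x ≤ S.toFun y := by
  have := S.pos' (y - x) (hy.sub hx) fun n => sub_nonneg.mpr (h n)
  rw [S.map_sub hy hx] at this
  linarith

lemma toFun_eq_of_tendsto_sub (hS : S.IsSingular) (hy : Bdd y)
    (h : Tendsto (x - y) atTop (𝓝 0)) : S.toFun x = S.toFun y := by
  have hx := Bdd.of_tendsto_sub hy h
  rw [← sub_eq_zero, ← S.map_sub hx hy]
  exact hS _ (hx.sub hy) h

lemma ext_eq_ofReal (hx : Bdd x) (h0 : ∀ n, 0 ≤ x n) : S.ext x = ENNReal.ofReal (S.toFun x) :=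
  le_antisymm (iSup₂_le fun _ hy => ENNReal.ofReal_le_ofReal (S.mono hy.1 hx hy.2.2))
    (le_iSup₂_of_le x ⟨hx, h0, fun _ => le_rfl⟩ le_rfl)

lemma ext_eq_ofReal_of_tendsto_sub (hS : S.IsSingular) (h0 : ∀ n, 0 ≤ x n) (hy : Bdd y)
    (h : Tendsto (x - y) atTop (𝓝 0)) : S.ext x = ENNReal.ofReal (S.toFun y) := by
  rw [S.ext_eq_ofReal (Bdd.of_tendsto_sub hy h) h0, S.toFun_eq_of_tendsto_sub hS hy h]

lemma toFun_eq_one_of_toFun_inv_eq_one {C : ℝ} (h1 : ∀ n, 1 ≤ x n) (hC : ∀ n, x n ≤ C)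
    (hinv : S.toFun x⁻¹ = 1) : S.toFun x = 1 := by
  have hx : Bdd x := .of_le_of_le h1 hC
  have hinvB : Bdd x⁻¹ := .of_le_of_le (fun n => (inv_pos.mpr (by linarith [h1 n])).le)
    fun n => inv_le_one_of_one_le₀ (h1 n)
  have hgap : Bdd (C • ((fun _ => 1) - x⁻¹)) := ((Bdd.const 1).sub hinvB).smul C
  have hlow := S.pos' (x - fun _ => 1) (hx.sub (.const 1)) fun n => sub_nonneg.mpr (h1 n)
  -- `x - 1 = x (1 - x⁻¹) ≤ C (1 - x⁻¹)` pointwise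
  have hup := S.mono (hx.sub (.const 1)) hgap fun n => by
    have hxn : 0 < x n := by linarith [h1 n]
    have : x n - 1 = x n * (1 - (x n)⁻¹) := by field_simp
    simp only [Pi.sub_apply, Pi.smul_apply, Pi.inv_apply, smul_eq_mul, this]
    exact mul_le_mul_of_nonneg_right (hC n) (sub_nonneg.mpr (inv_le_one_of_one_le₀ (h1 n)))
  rw [S.map_sub hx (.const 1), S.map_const] at hlow hup
  rw [S.map_smul' _ _ ((Bdd.const 1).sub hinvB), S.map_sub (.const 1) hinvB, S.map_const,
    hinv] at hup
  linarith

end LinfState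

section Concave

variable {ψ : ℝ → ℝ}

def unitIncrement (ψ : ℝ → ℝ) (k : ℕ) : ℝ := ψ (k + 2) - ψ (k + 1)

lemma sum_range_unitIncrement (ψ : ℝ → ℝ) (n : ℕ) :
    ∑ k ∈ range n, unitIncrement ψ k = ψ (n + 1) - ψ 1 := by
  induction n with
  | zero => simp
  | succ n ih =>
    rw [sum_range_succ, ih, unitIncrement]
    push_cast
    ring_nf

lemma unitIncrement_nonneg (hmono : MonotoneOn ψ (Set.Ioi 0)) (k : ℕ) : 0 ≤ unitIncrement ψ k :=
  sub_nonneg.mpr (hmono (by simp; positivity) (by simp; positivity) (by linarith))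

lemma antitone_unitIncrement (hconc : ConcaveOn ℝ (Set.Ioi 0) ψ) : Antitone (unitIncrement ψ) := by
  refine antitone_nat_of_succ_le fun k => ?_
  have := hconc.slope_anti_adjacent (x := k + 1) (y := k + 2) (z := k + 3)
    (by simp; positivity) (by simp; positivity) (by linarith) (by linarith)
  simp only [unitIncrement]
  push_cast
  ring_nf at this ⊢
  simpa using this

lemma abs_sub_le_unitIncrement_zero (hmono : MonotoneOn ψ (Set.Ioi 0))
    (hconc : ConcaveOn ℝ (Set.Ioi 0) ψ) {m j : ℕ} (hmj : m ≤ j) (hjm : j ≤ m + 1) :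
    |ψ (j + 1) - ψ (m + 1)| ≤ unitIncrement ψ 0 := by
  obtain rfl | rfl : j = m ∨ j = m + 1 := by omega
  · simpa using unitIncrement_nonneg hmono 0
  · have hinc : ψ ((m + 1 : ℕ) + 1) - ψ (m + 1) = unitIncrement ψ m := by
      simp only [unitIncrement]
      push_cast
      ring_nf
    rw [hinc, abs_of_nonneg (unitIncrement_nonneg hmono m)]
    exact antitone_unitIncrement hconc (Nat.zero_le m)

lemma sum_range_two_mul_le_of_antitone {a : ℕ → ℝ} (ha : Antitone a) (n : ℕ) :
    ∑ k ∈ range (2 * n), a k ≤ 2 * ∑ k ∈ range n, a k := by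
  rw [two_mul, sum_range_add, two_mul]
  gcongr with k
  exact ha (Nat.le_add_left k n)

lemma le_two_mul_of_concaveOn (hpos : ∀ t > (0 : ℝ), 0 < ψ t) (hconc : ConcaveOn ℝ (Set.Ioi 0) ψ)
    (n : ℕ) : ψ (2 * n + 1) ≤ 2 * ψ (n + 1) := by
  have := sum_range_two_mul_le_of_antitone (antitone_unitIncrement hconc) n
  rw [sum_range_unitIncrement, sum_range_unitIncrement] at this
  push_cast at this
  linarith [hpos 1 one_pos]

lemma tendsto_comp_natCast_add_one (htop : Tendsto ψ atTop atTop) :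
    Tendsto (fun n : ℕ => ψ (n + 1)) atTop atTop :=
  htop.comp (tendsto_atTop_add_const_right _ 1 tendsto_natCast_atTop_atTop)

noncomputable def doublingRatio (ψ : ℝ → ℝ) (n : ℕ) : ℝ := ψ (2 * (n : ℝ) + 1) / ψ ((n : ℝ) + 1)

lemma one_le_doublingRatio (hpos : ∀ t > (0 : ℝ), 0 < ψ t) (hmono : MonotoneOn ψ (Set.Ioi 0))
    (n : ℕ) : 1 ≤ doublingRatio ψ n :=
  (one_le_div (hpos _ (by positivity))).mpr
    (hmono (by simp; positivity) (by simp; positivity) (by linarith [n.cast_nonneg (α := ℝ)]))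

lemma doublingRatio_le_two (hpos : ∀ t > (0 : ℝ), 0 < ψ t) (hconc : ConcaveOn ℝ (Set.Ioi 0) ψ)
    (n : ℕ) : doublingRatio ψ n ≤ 2 :=
  (div_le_iff₀ (hpos _ (by positivity))).mpr (le_two_mul_of_concaveOn hpos hconc n)

end Concave

section Cesaro

variable {ψ : ℝ → ℝ}

noncomputable def cesaroMean (ψ : ℝ → ℝ) (a : ℕ → ℝ) (n : ℕ) : ℝ :=
  (∑ k ∈ range (n + 1), a k) / ψ ((n : ℝ) + 1)

lemma tau_eq_ext_cesaroMean (S : LinfState) (ψ : ℝ → ℝ) (a : ℕ → ℝ) :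
    tau S ψ a = S.ext (cesaroMean ψ a) := rfl

lemma cesaroMean_nonneg (hpos : ∀ t > (0 : ℝ), 0 < ψ t) {a : ℕ → ℝ} (ha : ∀ k, 0 ≤ a k)
    (n : ℕ) : 0 ≤ cesaroMean ψ a n :=
  div_nonneg (sum_nonneg fun k _ => ha k) (hpos _ (by positivity)).le

variable (hpos : ∀ t > (0 : ℝ), 0 < ψ t) (hmono : MonotoneOn ψ (Set.Ioi 0))
  (hconc : ConcaveOn ℝ (Set.Ioi 0) ψ) (htop : Tendsto ψ atTop atTop)
include hpos hmono hconc htop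

lemma tendsto_cesaroMean_unitIncrement_sub_one :
    Tendsto (cesaroMean ψ (unitIncrement ψ) - fun _ => 1) atTop (𝓝 0) := by
  have hB : Bdd fun n => unitIncrement ψ n - ψ 1 :=
    .of_le_of_le (a := -ψ 1) (b := unitIncrement ψ 0)
      (fun n => by linarith [unitIncrement_nonneg hmono n])
      (fun n => by linarith [antitone_unitIncrement hconc (Nat.zero_le n), hpos 1 one_pos])
  refine (hB.tendsto_div_atTop (tendsto_comp_natCast_add_one htop)).congr fun n => ?_
  have := hpos (n + 1) (by positivity)
  simp only [Pi.sub_apply, Pi.div_apply, cesaroMean, sum_range_unitIncrement]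
  rw [unitIncrement]
  push_cast
  field_simp
  ring_nf

lemma tendsto_cesaroMean_unitIncrement_comp_div_two_sub :
    Tendsto (cesaroMean ψ (fun k => unitIncrement ψ (k / 2)) -
      fun n => 2 * (doublingRatio ψ (n / 2))⁻¹) atTop (𝓝 0) := by
  set N : ℕ → ℝ := fun n => ψ (((n + 2) / 2 : ℕ) + 1) + ψ (((n + 1) / 2 : ℕ) + 1) - 2 * ψ 1
  set N' : ℕ → ℝ := fun n => 2 * ψ ((n / 2 : ℕ) + 1)
  set D' : ℕ → ℝ := fun n => ψ (2 * ((n / 2 : ℕ) : ℝ) + 1)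
  have hN : Bdd (N - N') := by
    refine ⟨2 * unitIncrement ψ 0 + 2 * |ψ 1|, fun n => ?_⟩
    have h1 := abs_sub_le_unitIncrement_zero hmono hconc
      (m := n / 2) (j := (n + 2) / 2) (by omega) (by omega)
    have h2 := abs_sub_le_unitIncrement_zero hmono hconc
      (m := n / 2) (j := (n + 1) / 2) (by omega) (by omega)
    simp only [Pi.sub_apply, N, N']
    rw [abs_le] at h1 h2 ⊢
    constructor <;> linarith [abs_nonneg (ψ 1), le_abs_self (ψ 1), neg_abs_le (ψ 1)]
  have hD : Bdd ((fun n : ℕ => ψ (n + 1)) - D') := by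
    refine ⟨unitIncrement ψ 0, fun n => ?_⟩
    have := abs_sub_le_unitIncrement_zero hmono hconc
      (m := 2 * (n / 2)) (j := n) (by omega) (by omega)
    push_cast at this
    exact this
  have hq : Bdd (N' / D') := by
    refine .of_le_of_le (a := 0) (b := 2) (fun n => ?_) (fun n => ?_)
    · exact div_nonneg (mul_nonneg zero_le_two (hpos _ (by positivity)).le)
        (hpos _ (by positivity)).le
    · have h1 := one_le_doublingRatio hpos hmono (n / 2)
      have : N' n / D' n = 2 * (doublingRatio ψ (n / 2))⁻¹ := by
        simp only [N', D', doublingRatio, inv_div, mul_div_assoc]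
      rw [Pi.div_apply, this]
      linarith [inv_le_one_of_one_le₀ h1]
  convert tendsto_div_sub_div_of_bdd (tendsto_comp_natCast_add_one htop) hN hD hq using 1
  funext n
  simp only [Pi.sub_apply, Pi.div_apply, cesaroMean, N, N', D', doublingRatio, inv_div,
    mul_div_assoc, sum_range_comp_div_two (unitIncrement ψ), sum_range_unitIncrement]
  ring_nf

end Cesaro

theorem omega_ratio_eq_one_of_additive_general (S : LinfState) (ψ : ℝ → ℝ)
    (hpos : ∀ t > (0 : ℝ), 0 < ψ t)
    (hmono : MonotoneOn ψ (Set.Ioi (0 : ℝ)))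
    (hconc : ConcaveOn ℝ (Set.Ioi (0 : ℝ)) ψ)
    (htop : Tendsto ψ atTop atTop)
    (hsing : ∀ x : ℕ → ℝ, Bdd x → Tendsto x atTop (nhds 0) → S.toFun x = 0)
    (hdilinv : ∀ n : ℕ, 1 ≤ n → ∀ x : ℕ → ℝ, Bdd x →
      S.toFun (fun k => x (k / n)) = S.toFun x)
    (hadd : ∀ a b c : ℕ → ℝ, Antitone a → Antitone b → Antitone c →
      (∀ k, 0 ≤ a k) → (∀ k, 0 ≤ b k) →
      (∃ e : ℕ ≃ ℕ ⊕ ℕ, ∀ k, c k = Sum.elim a b (e k)) →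
      tau S ψ c = tau S ψ a + tau S ψ b) :
    S.toFun (fun n => ψ (2 * (n : ℝ) + 1) / ψ ((n : ℝ) + 1)) = 1 := by
  set a := unitIncrement ψ
  have ha : Antitone a := antitone_unitIncrement hconc
  have ha0 : ∀ k, 0 ≤ a k := unitIncrement_nonneg hmono
  have hinvB : Bdd (doublingRatio ψ)⁻¹ :=
    .of_le_of_le (fun m => inv_nonneg.mpr (zero_le_one.trans (one_le_doublingRatio hpos hmono m)))
      (fun m => inv_le_one_of_one_le₀ (one_le_doublingRatio hpos hmono m))
  have hτa : tau S ψ a = 1 := by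
    rw [tau_eq_ext_cesaroMean, S.ext_eq_ofReal_of_tendsto_sub hsing (cesaroMean_nonneg hpos ha0)
      (.const 1) (tendsto_cesaroMean_unitIncrement_sub_one hpos hmono hconc htop), S.map_const,
      ENNReal.ofReal_one]
  have hτc : tau S ψ (fun k => a (k / 2)) =
      ENNReal.ofReal (S.toFun fun n => ((2 : ℝ) • (doublingRatio ψ)⁻¹) (n / 2)) :=
    S.ext_eq_ofReal_of_tendsto_sub hsing (cesaroMean_nonneg hpos fun k => ha0 _)
      ((hinvB.smul 2).comp (· / 2))
      (tendsto_cesaroMean_unitIncrement_comp_div_two_sub hpos hmono hconc htop)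
  have hsum := hadd a a _ ha ha (fun i j hij => ha (Nat.div_le_div_right hij)) ha0 ha0
    ⟨Equiv.natSumNatEquivNat.symm, fun k => (sum_elim_comp_natSumNatEquivNat_symm a k).symm⟩
  rw [hτa, hτc, one_add_one_eq_two, ENNReal.ofReal_eq_ofNat,
    hdilinv 2 one_le_two _ (hinvB.smul 2), S.map_smul' _ _ hinvB] at hsum
  have hinv : S.toFun (doublingRatio ψ)⁻¹ = 1 := by linarith
  exact S.toFun_eq_one_of_toFun_inv_eq_one (one_le_doublingRatio hpos hmono)
    (doublingRatio_le_two hpos hconc) hinv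

/-- If the Dixmier weight `τ_ω` associated with a concave increasing unbounded
`ψ` and a singular dilation-invariant state `ω` is finite on all nonincreasing
sequences of the corresponding Marcinkiewicz ideal, and is additive on disjoint
sums (i.e. `τ_ω(c) = τ_ω(a) + τ_ω(b)` whenever `c` is the nonincreasing
rearrangement of the disjoint sum of nonincreasing `a` and `b`), then
`ω({ψ(2n+1)/ψ(n+1)}) = 1`. -/
theorem omega_ratio_eq_one_of_additive (S : LinfState) (ψ : ℝ → ℝ)
    (hpos : ∀ t > (0 : ℝ), 0 < ψ t)
    (hmono : MonotoneOn ψ (Set.Ioi (0 : ℝ)))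
    (hconc : ConcaveOn ℝ (Set.Ioi (0 : ℝ)) ψ)
    (htop : Tendsto ψ atTop atTop)
    (hsing : ∀ x : ℕ → ℝ, Bdd x → Tendsto x atTop (nhds 0) → S.toFun x = 0)
    (hdilinv : ∀ n : ℕ, 1 ≤ n → ∀ x : ℕ → ℝ, Bdd x →
      S.toFun (fun k => x (k / n)) = S.toFun x)
    (hfin : ∀ a : ℕ → ℝ, Antitone a → (∀ k, 0 ≤ a k) →
      (∃ M : ℝ, ∀ n, (∑ k ∈ Finset.range (n + 1), a k) ≤ M * ψ ((n : ℝ) + 1)) →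
      tau S ψ a < ⊤)
    (hadd : ∀ a b c : ℕ → ℝ, Antitone a → Antitone b → Antitone c →
      (∀ k, 0 ≤ a k) → (∀ k, 0 ≤ b k) →
      (∃ e : ℕ ≃ ℕ ⊕ ℕ, ∀ k, c k = Sum.elim a b (e k)) →
      tau S ψ c = tau S ψ a + tau S ψ b) :
    S.toFun (fun n => ψ (2 * (n : ℝ) + 1) / ψ ((n : ℝ) + 1)) = 1 :=
  omega_ratio_eq_one_of_additive_general S ψ hpos hmono hconc htop hsing hdilinv hadd
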